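/- Let p be in the Carathéodory class P with expansion p(z) = 1 + Σ_{n≥1} p_n z^n, let w(z) = (p(z) − 1)/(p(z) + 1), and let f(z) = z + Σ_{n≥2} a_n z^n be analytic on 𝔻 with 1 + z f''(z)/f'(z) = e^{w(z)} for all z ∈ 𝔻 (so f ∈ C_e). Then a_2 = p_1/4, a_3 = (p_1^2 + 4 p_2)/48, a_4 = (−p_1^3 + 12 p_1 p_2 + 48 p_3)/1152, and a_5 = (p_1^4 − 12 p_1^2 p_2 + 24 p_1 p_3 + 144 p_4)/5760. -/

import Mathlib

/-!
Multiplying by `f'` turns the defining equation into `(z f')' = f' e^w`, while `w` solves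
`w (p + 1) = p - 1` and `(e^w)' = w' e^w`. Leibniz' rule applied at `0` to these three product
identities gives triangular systems for the derivatives of `w`, `e^w` and `f'` in turn, and the
Taylor coefficients are these derivatives divided by factorials.
-/

open Complex Metric Filter Topology Finset Nat FormalMultilinearSeries

theorem iteratedDeriv_eq_factorial_mul_of_hasSum {g : ℂ → ℂ} {c : ℕ → ℂ} {r : ℝ} (hr : 0 < r)
    (h : ∀ z ∈ ball (0 : ℂ) r, HasSum (fun n => c n * z ^ n) (g z)) (n : ℕ) :
    iteratedDeriv n g 0 = n ! * c n := by
  have hb : HasFPowerSeriesOnBall g (ofScalars ℂ c) 0 (ENNReal.ofReal r) := by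
    refine ⟨ENNReal.le_of_forall_nnreal_lt fun t ht => ?_, ENNReal.ofReal_pos.2 hr, fun hy => ?_⟩
    · have ht' : ((t : ℝ) : ℂ) ∈ ball (0 : ℂ) r := by
        simpa using ENNReal.coe_lt_ofReal.1 ht
      refine le_radius_of_tendsto _ (l := 0) ?_
      simpa [ofScalars_norm] using (h _ ht').summable.tendsto_atTop_zero.norm
    · simpa [ofScalars_apply_eq, mul_comm] using h _ (by simpa using hy)
  have := hb.factorial_smul 1 n
  rw [iteratedDeriv_eq_iteratedFDeriv, ← this, ofScalars_apply_eq]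
  simp

section IteratedDeriv

variable {𝕜 : Type*} [NontriviallyNormedField 𝕜]

lemma iteratedDeriv_add_const_of_pos {f : 𝕜 → 𝕜} {x : 𝕜} {n : ℕ} (hn : 0 < n) (c : 𝕜) :
    iteratedDeriv n (fun z => f z + c) x = iteratedDeriv n f x := by
  simpa only [add_comm] using iteratedDeriv_const_add hn c (f := f) (x := x)

lemma iteratedDeriv_eq_sum_of_eventuallyEq_mul {h u v : 𝕜 → 𝕜} {x : 𝕜} {n : ℕ}
    (huv : h =ᶠ[𝓝 x] u * v) (hu : ContDiffAt 𝕜 n u x) (hv : ContDiffAt 𝕜 n v x) :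
    iteratedDeriv n h x = ∑ i ∈ range (n + 1),
      n.choose i * iteratedDeriv i u x * iteratedDeriv (n - i) v x :=
  (huv.iteratedDeriv_eq n).trans (iteratedDeriv_mul hu hv)

lemma iteratedDeriv_succ_id_mul_zero {g : 𝕜 → 𝕜} {n : ℕ} (hg : ContDiffAt 𝕜 (n + 1 : ℕ) g 0) :
    iteratedDeriv (n + 1) (fun z => z * g z) 0 = (n + 1) * iteratedDeriv n g 0 := by
  rw [iteratedDeriv_fun_mul contDiffAt_fun_id hg, sum_eq_single 1]
  · simp [iteratedDeriv_fun_id_zero]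
  · intro i _ hi
    simp [iteratedDeriv_fun_id_zero, hi]
  · simp

variable [CompleteSpace 𝕜] [CharZero 𝕜]

theorem iteratedDeriv_sub_one_div_add_one {p : 𝕜 → 𝕜} {x : 𝕜} (hp : AnalyticAt 𝕜 p x)
    (hpx : p x = 1) :
    iteratedDeriv 1 (fun z => (p z - 1) / (p z + 1)) x = iteratedDeriv 1 p x / 2 ∧
    iteratedDeriv 2 (fun z => (p z - 1) / (p z + 1)) x =
      (iteratedDeriv 2 p x - iteratedDeriv 1 p x ^ 2) / 2 ∧
    iteratedDeriv 3 (fun z => (p z - 1) / (p z + 1)) x =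
      (iteratedDeriv 3 p x - 3 * iteratedDeriv 1 p x * iteratedDeriv 2 p x
        + 3 / 2 * iteratedDeriv 1 p x ^ 3) / 2 ∧
    iteratedDeriv 4 (fun z => (p z - 1) / (p z + 1)) x =
      (iteratedDeriv 4 p x - 4 * iteratedDeriv 1 p x * iteratedDeriv 3 p x
        - 3 * iteratedDeriv 2 p x ^ 2 + 9 * iteratedDeriv 1 p x ^ 2 * iteratedDeriv 2 p x
        - 3 * iteratedDeriv 1 p x ^ 4) / 2 := by
  set w := fun z => (p z - 1) / (p z + 1)
  have hp1 : AnalyticAt 𝕜 (fun z => p z + 1) x := by fun_prop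
  have hw : AnalyticAt 𝕜 w x := (hp.fun_sub analyticAt_const).fun_div hp1 (by rw [hpx]; norm_num)
  have hwx : w x = 0 := by simp [w, hpx]
  have hrel : (fun z => p z - 1) =ᶠ[𝓝 x] w * fun z => p z + 1 := by
    filter_upwards [hp1.continuousAt.eventually_ne (by rw [hpx]; norm_num : p x + 1 ≠ 0)] with z hz
    simp [w, div_mul_cancel₀ _ hz]
  have leibniz : ∀ n, 0 < n → iteratedDeriv n p x = ∑ i ∈ range (n + 1),
      n.choose i * iteratedDeriv i w x * iteratedDeriv (n - i) (fun z => p z + 1) x := by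
    intro n hn
    rw [← iteratedDeriv_eq_sum_of_eventuallyEq_mul hrel hw.contDiffAt hp1.contDiffAt]
    simp only [sub_eq_add_neg, iteratedDeriv_add_const_of_pos hn]
  have h1 := leibniz 1 (by norm_num)
  have h2 := leibniz 2 (by norm_num)
  have h3 := leibniz 3 (by norm_num)
  have h4 := leibniz 4 (by norm_num)
  simp only [Finset.sum_range_succ, Finset.sum_range_zero] at h1 h2 h3 h4
  norm_num [Nat.choose, iteratedDeriv_add_const_of_pos, hpx, hwx] at h1 h2 h3 h4 ⊢
  refine ⟨?_, ?_, ?_, ?_⟩ <;> grind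

theorem iteratedDeriv_of_one_add_mul_deriv_div_eq {g E : 𝕜 → 𝕜} (hg : AnalyticAt 𝕜 g 0)
    (hE : AnalyticAt 𝕜 E 0) (hg0 : g 0 = 1)
    (h : ∀ᶠ z in 𝓝 0, 1 + z * deriv g z / g z = E z) :
    iteratedDeriv 1 g 0 = iteratedDeriv 1 E 0 ∧
    iteratedDeriv 2 g 0 = iteratedDeriv 1 E 0 ^ 2 + iteratedDeriv 2 E 0 / 2 ∧
    iteratedDeriv 3 g 0 = iteratedDeriv 1 E 0 ^ 3
      + 3 / 2 * iteratedDeriv 1 E 0 * iteratedDeriv 2 E 0 + iteratedDeriv 3 E 0 / 3 ∧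
    iteratedDeriv 4 g 0 = iteratedDeriv 1 E 0 ^ 4
      + 3 * iteratedDeriv 1 E 0 ^ 2 * iteratedDeriv 2 E 0
      + 4 / 3 * iteratedDeriv 1 E 0 * iteratedDeriv 3 E 0 + 3 / 4 * iteratedDeriv 2 E 0 ^ 2
      + iteratedDeriv 4 E 0 / 4 := by
  have hE0 : E 0 = 1 := by simpa using h.self_of_nhds.symm
  have hrel : deriv (fun z => z * g z) =ᶠ[𝓝 0] g * E := by
    filter_upwards [h, hg.eventually_analyticAt,
      hg.continuousAt.eventually_ne (by rw [hg0]; exact one_ne_zero : g 0 ≠ 0)] with z hz hgz hz0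
    rw [((hasDerivAt_id' z).fun_mul hgz.differentiableAt.hasDerivAt).deriv, Pi.mul_apply, ← hz]
    field_simp
  have leibniz : ∀ n, (n + 1) * iteratedDeriv n g 0 = ∑ i ∈ range (n + 1),
      n.choose i * iteratedDeriv i g 0 * iteratedDeriv (n - i) E 0 := by
    intro n
    rw [← iteratedDeriv_succ_id_mul_zero hg.contDiffAt, iteratedDeriv_succ',
      iteratedDeriv_eq_sum_of_eventuallyEq_mul hrel hg.contDiffAt hE.contDiffAt]
  have h1 := leibniz 1
  have h2 := leibniz 2
  have h3 := leibniz 3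
  have h4 := leibniz 4
  simp only [Finset.sum_range_succ, Finset.sum_range_zero] at h1 h2 h3 h4
  norm_num [Nat.choose, hg0, hE0] at h1 h2 h3 h4 ⊢
  refine ⟨?_, ?_, ?_, ?_⟩ <;> grind

theorem iteratedDeriv_cexp_comp {w : ℂ → ℂ} {x : ℂ} (hw : AnalyticAt ℂ w x) :
    iteratedDeriv 1 (fun z => exp (w z)) x = iteratedDeriv 1 w x * exp (w x) ∧
    iteratedDeriv 2 (fun z => exp (w z)) x =
      (iteratedDeriv 2 w x + iteratedDeriv 1 w x ^ 2) * exp (w x) ∧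
    iteratedDeriv 3 (fun z => exp (w z)) x =
      (iteratedDeriv 3 w x + 3 * iteratedDeriv 1 w x * iteratedDeriv 2 w x
        + iteratedDeriv 1 w x ^ 3) * exp (w x) ∧
    iteratedDeriv 4 (fun z => exp (w z)) x =
      (iteratedDeriv 4 w x + 4 * iteratedDeriv 1 w x * iteratedDeriv 3 w x
        + 3 * iteratedDeriv 2 w x ^ 2 + 6 * iteratedDeriv 1 w x ^ 2 * iteratedDeriv 2 w x
        + iteratedDeriv 1 w x ^ 4) * exp (w x) := by
  set E := fun z => exp (w z)
  have hE : AnalyticAt ℂ E x := analyticAt_cexp.comp hw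
  have hrel : deriv E =ᶠ[𝓝 x] deriv w * E := by
    filter_upwards [hw.eventually_analyticAt] with z hz
    simp [E, hz.differentiableAt.hasDerivAt.cexp.deriv, mul_comm]
  have leibniz : ∀ n, iteratedDeriv (n + 1) E x = ∑ i ∈ range (n + 1),
      n.choose i * iteratedDeriv (i + 1) w x * iteratedDeriv (n - i) E x := by
    intro n
    simp only [iteratedDeriv_succ', iteratedDeriv_eq_sum_of_eventuallyEq_mul hrel
      hw.deriv.contDiffAt hE.contDiffAt]
  have h1 := leibniz 0
  have h2 := leibniz 1
  have h3 := leibniz 2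
  have h4 := leibniz 3
  simp only [Finset.sum_range_succ, Finset.sum_range_zero] at h1 h2 h3 h4
  norm_num [Nat.choose] at h1 h2 h3 h4 ⊢
  refine ⟨?_, ?_, ?_, ?_⟩ <;> grind

theorem Ce_initial_coefficients_general (p f : ℂ → ℂ) (pc a : ℕ → ℂ)
    (hp : AnalyticOnNhd ℂ p (ball (0 : ℂ) 1))
    (hpc0 : pc 0 = 1)
    (hpsum : ∀ z ∈ ball (0 : ℂ) 1, HasSum (fun n => pc n * z ^ n) (p z))
    (hf : AnalyticOnNhd ℂ f (ball (0 : ℂ) 1))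
    (ha1 : a 1 = 1)
    (hfsum : ∀ z ∈ ball (0 : ℂ) 1, HasSum (fun n => a n * z ^ n) (f z))
    (heq : ∀ z ∈ ball (0 : ℂ) 1,
      1 + z * deriv (deriv f) z / deriv f z = Complex.exp ((p z - 1) / (p z + 1))) :
    a 2 = pc 1 / 4 ∧
    a 3 = (pc 1 ^ 2 + 4 * pc 2) / 48 ∧
    a 4 = (-(pc 1 ^ 3) + 12 * pc 1 * pc 2 + 48 * pc 3) / 1152 ∧
    a 5 = (pc 1 ^ 4 - 12 * pc 1 ^ 2 * pc 2 + 24 * pc 1 * pc 3 + 144 * pc 4) / 5760 := by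
  have h0 : (0 : ℂ) ∈ ball (0 : ℂ) 1 := mem_ball_self one_pos
  have hP := iteratedDeriv_eq_factorial_mul_of_hasSum one_pos hpsum
  have hA := iteratedDeriv_eq_factorial_mul_of_hasSum one_pos hfsum
  have hp0 : p 0 = 1 := by simpa [hpc0] using hP 0
  have hf'0 : deriv f 0 = 1 := by simpa [ha1] using hA 1
  have hpa := hp 0 h0
  have hw : AnalyticAt ℂ (fun z => (p z - 1) / (p z + 1)) 0 :=
    (hpa.fun_sub analyticAt_const).fun_div (by fun_prop) (by norm_num [hp0])
  have ha : ∀ k, a (k + 1) = iteratedDeriv k (deriv f) 0 / (k + 1)! := fun k => by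
    rw [← iteratedDeriv_succ', hA, mul_div_cancel_left₀ _ (cast_ne_zero.2 (factorial_ne_zero _))]
  obtain ⟨w1, w2, w3, w4⟩ := iteratedDeriv_sub_one_div_add_one hpa hp0
  obtain ⟨e1, e2, e3, e4⟩ := iteratedDeriv_cexp_comp hw
  obtain ⟨g1, g2, g3, g4⟩ := iteratedDeriv_of_one_add_mul_deriv_div_eq
    (E := fun z => exp ((p z - 1) / (p z + 1))) (hf 0 h0).deriv (analyticAt_cexp.comp hw) hf'0
    (eventually_of_mem (isOpen_ball.mem_nhds h0) heq)
  simp only [ha 1, ha 2, ha 3, ha 4, g1, g2, g3, g4, e1, e2, e3, e4, w1, w2, w3, w4, hP, hp0]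
  norm_num [factorial]
  refine ⟨?_, ?_, ?_, ?_⟩ <;> ring

/-- Initial coefficient formulas for `C_e`: if `p` is in the Carathéodory class `P` with
coefficients `pc`, `w = (p − 1)/(p + 1)`, and `f` (with Taylor coefficients `a`) satisfies
`1 + z f''(z)/f'(z) = e^{w(z)}` on the unit disk, then `a₂, a₃, a₄, a₅` are as stated. -/
theorem Ce_initial_coefficients (p f : ℂ → ℂ) (pc a : ℕ → ℂ)
    (hp : AnalyticOnNhd ℂ p (ball (0 : ℂ) 1))
    (hpc0 : pc 0 = 1)
    (hpre : ∀ z ∈ ball (0 : ℂ) 1, 0 < (p z).re)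
    (hpsum : ∀ z ∈ ball (0 : ℂ) 1, HasSum (fun n => pc n * z ^ n) (p z))
    (hf : AnalyticOnNhd ℂ f (ball (0 : ℂ) 1))
    (ha0 : a 0 = 0) (ha1 : a 1 = 1)
    (hfsum : ∀ z ∈ ball (0 : ℂ) 1, HasSum (fun n => a n * z ^ n) (f z))
    (heq : ∀ z ∈ ball (0 : ℂ) 1,
      1 + z * deriv (deriv f) z / deriv f z = Complex.exp ((p z - 1) / (p z + 1))) :
    a 2 = pc 1 / 4 ∧
    a 3 = (pc 1 ^ 2 + 4 * pc 2) / 48 ∧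
    a 4 = (-(pc 1 ^ 3) + 12 * pc 1 * pc 2 + 48 * pc 3) / 1152 ∧
    a 5 = (pc 1 ^ 4 - 12 * pc 1 ^ 2 * pc 2 + 24 * pc 1 * pc 3 + 144 * pc 4) / 5760 :=
  Ce_initial_coefficients_general p f pc a hp hpc0 hpsum hf ha1 hfsum heq
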